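/- For smooth 2π-periodic functions f : ℝ → ℂ define the cochains φ₂(f₀,f₁,f₂) = (-1/(4πi))·∫₀^{2π} f₀·f₁′·f₂″ dθ, φ₃(f₀,f₁,f₂,f₃) = (-1/(2πi))·∫₀^{2π} f₀·f₁′·f₂′·f₃′ dθ, and ψ₃(f₀,f₁) = (1/(2πi))·∫₀^{2π} f₀·f₁‴ dθ. Then for all smooth 2π-periodic f₀,f₁,f₂,f₃ : ℝ → ℂ: (i) (b φ₂)(f₀,f₁,f₂,f₃) := φ₂(f₀f₁,f₂,f₃) - φ₂(f₀,f₁f₂,f₃) + φ₂(f₀,f₁,f₂f₃) - φ₂(f₃f₀,f₁,f₂) = φ₃(f₀,f₁,f₂,f₃); (ii) (B φ₂)(f₀,f₁) := (φ₂(1,f₀,f₁) - φ₂(f₀,f₁,1)) - (φ₂(1,f₁,f₀) - φ₂(f₁,f₀,1)) = ψ₃(f₀,f₁). -/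

import Mathlib

open Real

/-- The 2-cochain `φ₂(f₀,f₁,f₂) = (-1/(4πi))·∫₀^{2π} f₀·f₁′·f₂″ dθ` on `C^∞(S¹)`. -/
noncomputable def phi2 (f0 f1 f2 : ℝ → ℂ) : ℂ :=
  (-1 / (4 * (Real.pi : ℂ) * Complex.I)) *
    ∫ θ in (0 : ℝ)..(2 * Real.pi), f0 θ * deriv f1 θ * deriv (deriv f2) θ

/-- The 3-cochain `φ₃(f₀,f₁,f₂,f₃) = (-1/(2πi))·∫₀^{2π} f₀·f₁′·f₂′·f₃′ dθ` on `C^∞(S¹)`. -/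
noncomputable def phi3 (f0 f1 f2 f3 : ℝ → ℂ) : ℂ :=
  (-1 / (2 * (Real.pi : ℂ) * Complex.I)) *
    ∫ θ in (0 : ℝ)..(2 * Real.pi), f0 θ * deriv f1 θ * deriv f2 θ * deriv f3 θ

/-- The 1-cochain `ψ₃(f₀,f₁) = (1/(2πi))·∫₀^{2π} f₀·f₁‴ dθ` on `C^∞(S¹)`. -/
noncomputable def psi3 (f0 f1 : ℝ → ℂ) : ℂ :=
  (1 / (2 * (Real.pi : ℂ) * Complex.I)) *
    ∫ θ in (0 : ℝ)..(2 * Real.pi), f0 θ * deriv (deriv (deriv f1)) θ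

/-- A periodic function has periodic derivative. -/
lemma per_deriv {f : ℝ → ℂ} {c : ℝ} (p : Function.Periodic f c) :
    Function.Periodic (deriv f) c := by
  intro x
  have h : (fun y : ℝ => f (y + c)) = f := funext p
  calc deriv f (x + c) = deriv (fun y => f (y + c)) x := (deriv_comp_add_const f c x).symm
    _ = deriv f x := by rw [h]

lemma smooth_deriv {f : ℝ → ℂ} (hf : ContDiff ℝ (⊤ : ℕ∞) f) :
    ContDiff ℝ (⊤ : ℕ∞) (deriv f) := (contDiff_infty_iff_deriv.mp hf).2

lemma deriv_mul_fun {f g : ℝ → ℂ} (hf : ContDiff ℝ (⊤ : ℕ∞) f) (hg : ContDiff ℝ (⊤ : ℕ∞) g) :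
    deriv (fun θ => f θ * g θ) = fun θ => deriv f θ * g θ + f θ * deriv g θ :=
  funext fun θ =>
    deriv_fun_mul (hf.differentiable (by simp) θ) (hg.differentiable (by simp) θ)

lemma deriv2_mul {f g : ℝ → ℂ} (hf : ContDiff ℝ (⊤ : ℕ∞) f) (hg : ContDiff ℝ (⊤ : ℕ∞) g) :
    deriv (deriv (fun θ => f θ * g θ))
      = fun θ => deriv (deriv f) θ * g θ + 2 * (deriv f θ * deriv g θ)
          + f θ * deriv (deriv g) θ := by
  rw [deriv_mul_fun hf hg]
  funext θ
  have df := hf.differentiable (by simp)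
  have dg := hg.differentiable (by simp)
  have df' := (smooth_deriv hf).differentiable (by simp)
  have dg' := (smooth_deriv hg).differentiable (by simp)
  rw [deriv_fun_add (f := fun θ => deriv f θ * g θ) (g := fun θ => f θ * deriv g θ) ((df' θ).mul (dg θ)) ((df θ).mul (dg' θ)),
      deriv_fun_mul (df' θ) (dg θ), deriv_fun_mul (df θ) (dg' θ)]
  ring

lemma int_deriv_zero {F : ℝ → ℂ} (hF : ContDiff ℝ (⊤ : ℕ∞) F)
    (pF : Function.Periodic F (2 * Real.pi)) :
    (∫ θ in (0:ℝ)..(2 * Real.pi), deriv F θ) = 0 := by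
  rw [intervalIntegral.integral_deriv_eq_sub
      (fun x _ => hF.differentiable (by simp) x)
      (((smooth_deriv hF).continuous).intervalIntegrable _ _)]
  have := pF 0
  simp at this
  simp [this]

lemma ibp {u v : ℝ → ℂ} (hu : ContDiff ℝ (⊤ : ℕ∞) u) (hv : ContDiff ℝ (⊤ : ℕ∞) v)
    (pu : Function.Periodic u (2 * Real.pi)) (pv : Function.Periodic v (2 * Real.pi)) :
    (∫ θ in (0:ℝ)..(2 * Real.pi), deriv u θ * v θ)
      = -∫ θ in (0:ℝ)..(2 * Real.pi), u θ * deriv v θ := by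
  have h0 := int_deriv_zero (hu.mul hv) (pu.mul pv)
  rw [deriv_mul_fun hu hv] at h0
  beta_reduce at h0
  rw [intervalIntegral.integral_add (f := fun θ => deriv u θ * v θ) (g := fun θ => u θ * deriv v θ)
      ((((smooth_deriv hu).continuous.mul hv.continuous)).intervalIntegrable _ _)
      (((hu.continuous.mul (smooth_deriv hv).continuous)).intervalIntegrable _ _)] at h0
  linear_combination h0

/-- On smooth `2π`-periodic functions: (i) `b φ₂ = φ₃` and
(ii) `B φ₂ = ψ₃`, where `b` is the Hochschild coboundary and `B` the Connes boundary
operator, written out explicitly on a 2-cochain. -/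
theorem stmt_15 (f0 f1 f2 f3 : ℝ → ℂ)
    (h0 : ContDiff ℝ (⊤ : ℕ∞) f0) (h1 : ContDiff ℝ (⊤ : ℕ∞) f1)
    (h2 : ContDiff ℝ (⊤ : ℕ∞) f2) (h3 : ContDiff ℝ (⊤ : ℕ∞) f3)
    (p0 : Function.Periodic f0 (2 * Real.pi)) (p1 : Function.Periodic f1 (2 * Real.pi))
    (p2 : Function.Periodic f2 (2 * Real.pi)) (p3 : Function.Periodic f3 (2 * Real.pi)) :
    (phi2 (fun θ => f0 θ * f1 θ) f2 f3 - phi2 f0 (fun θ => f1 θ * f2 θ) f3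
        + phi2 f0 f1 (fun θ => f2 θ * f3 θ) - phi2 (fun θ => f3 θ * f0 θ) f1 f2
      = phi3 f0 f1 f2 f3) ∧
    ((phi2 (fun _ => 1) f0 f1 - phi2 f0 f1 (fun _ => 1))
        - (phi2 (fun _ => 1) f1 f0 - phi2 f1 f0 (fun _ => 1))
      = psi3 f0 f1) := by
  have hπ : (Real.pi : ℂ) ≠ 0 := by exact_mod_cast Real.pi_ne_zero
  have hI : Complex.I ≠ 0 := Complex.I_ne_zero
  have c0 := h0.continuous
  have c1 := h1.continuous
  have c2 := h2.continuous
  have c3 := h3.continuous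
  have c0' := (smooth_deriv h0).continuous
  have c1' := (smooth_deriv h1).continuous
  have c2' := (smooth_deriv h2).continuous
  have c3' := (smooth_deriv h3).continuous
  have c0'' := (smooth_deriv (smooth_deriv h0)).continuous
  have c1'' := (smooth_deriv (smooth_deriv h1)).continuous
  have c2'' := (smooth_deriv (smooth_deriv h2)).continuous
  have c3'' := (smooth_deriv (smooth_deriv h3)).continuous
  constructor
  · -- part (i): b φ₂ = φ₃
    have part1 : (∫ θ in (0:ℝ)..(2*Real.pi), (f0 θ * f1 θ) * deriv f2 θ * deriv (deriv f3) θ)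
        - (∫ θ in (0:ℝ)..(2*Real.pi),
            f0 θ * (deriv f1 θ * f2 θ + f1 θ * deriv f2 θ) * deriv (deriv f3) θ)
        + (∫ θ in (0:ℝ)..(2*Real.pi), f0 θ * deriv f1 θ *
            (deriv (deriv f2) θ * f3 θ + 2 * (deriv f2 θ * deriv f3 θ) + f2 θ * deriv (deriv f3) θ))
        - (∫ θ in (0:ℝ)..(2*Real.pi), (f3 θ * f0 θ) * deriv f1 θ * deriv (deriv f2) θ)
        = 2 * ∫ θ in (0:ℝ)..(2*Real.pi), f0 θ * deriv f1 θ * deriv f2 θ * deriv f3 θ := by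
      have i1 : IntervalIntegrable (fun θ => (f0 θ * f1 θ) * deriv f2 θ * deriv (deriv f3) θ)
          MeasureTheory.volume 0 (2*Real.pi) := (by fun_prop : Continuous _).intervalIntegrable _ _
      have i2 : IntervalIntegrable
          (fun θ => f0 θ * (deriv f1 θ * f2 θ + f1 θ * deriv f2 θ) * deriv (deriv f3) θ)
          MeasureTheory.volume 0 (2*Real.pi) := (by fun_prop : Continuous _).intervalIntegrable _ _
      have i3 : IntervalIntegrable (fun θ => f0 θ * deriv f1 θ *
            (deriv (deriv f2) θ * f3 θ + 2 * (deriv f2 θ * deriv f3 θ) + f2 θ * deriv (deriv f3) θ))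
          MeasureTheory.volume 0 (2*Real.pi) := (by fun_prop : Continuous _).intervalIntegrable _ _
      have i4 : IntervalIntegrable (fun θ => (f3 θ * f0 θ) * deriv f1 θ * deriv (deriv f2) θ)
          MeasureTheory.volume 0 (2*Real.pi) := (by fun_prop : Continuous _).intervalIntegrable _ _
      rw [← intervalIntegral.integral_sub i1 i2, ← intervalIntegral.integral_add (i1.sub i2) i3,
          ← intervalIntegral.integral_sub ((i1.sub i2).add i3) i4,
          ← intervalIntegral.integral_const_mul]
      exact intervalIntegral.integral_congr fun θ _ => by ring
    unfold phi2 phi3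
    simp only [deriv_mul_fun h1 h2, deriv2_mul h2 h3]
    linear_combination (-1 / (4 * (Real.pi:ℂ) * Complex.I)) * part1
  · -- part (ii): B φ₂ = ψ₃
    have e1 : (∫ θ in (0:ℝ)..(2*Real.pi), deriv f0 θ * deriv (deriv f1) θ)
        = -∫ θ in (0:ℝ)..(2*Real.pi), f0 θ * deriv (deriv (deriv f1)) θ :=
      ibp h0 (smooth_deriv (smooth_deriv h1)) p0 (per_deriv (per_deriv p1))
    have e2 : (∫ θ in (0:ℝ)..(2*Real.pi), deriv (deriv f1) θ * deriv f0 θ)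
        = -∫ θ in (0:ℝ)..(2*Real.pi), deriv f1 θ * deriv (deriv f0) θ :=
      ibp (smooth_deriv h1) (smooth_deriv h0) (per_deriv p1) (per_deriv p0)
    have comm : (∫ θ in (0:ℝ)..(2*Real.pi), deriv (deriv f1) θ * deriv f0 θ)
        = ∫ θ in (0:ℝ)..(2*Real.pi), deriv f0 θ * deriv (deriv f1) θ :=
      intervalIntegral.integral_congr fun θ _ => mul_comm _ _
    unfold phi2 psi3
    simp only [deriv_const', one_mul, mul_zero, intervalIntegral.integral_zero, sub_zero]
    linear_combination (-1 / (2 * (Real.pi:ℂ) * Complex.I)) * e1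
      + (1 / (4 * (Real.pi:ℂ) * Complex.I)) * e2 - (1 / (4 * (Real.pi:ℂ) * Complex.I)) * comm
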